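/- arXiv:2002.07530 — 2 statements merged into one kernel-verified Lean document; each statement's English description precedes it below -/
import Mathlib

section
/- For all real z₁, z₂, the average derivative of the sigmoid along the segment is controlled by the endpoint derivative: μ'(z₁)·(1 - exp(-|z₁-z₂|))/|z₁-z₂| ≤ ∫₀¹ μ'(z₁ + v(z₂-z₁)) dv ≤ μ'(z₁)·(exp(|z₁-z₂|) - 1)/|z₁-z₂| (when z₁ ≠ z₂). -/
noncomputable def sigmoid (x : ℝ) : ℝ := (1 + Real.exp (-x))⁻¹

/-!
The sigmoid is self-concordant: `μ'' = μ' (1 - 2μ)` with `0 < μ < 1`, so `|μ''| ≤ μ'`. For any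
`f` with `|f'| ≤ f`, the functions `f t * exp t` and `f t * exp (-t)` are respectively monotone and
antitone, so `f x * exp (-|y - x|) ≤ f y ≤ f x * exp |y - x|`. Along the segment
`z₁ + v (z₂ - z₁)` we have `|y - z₁| = v |z₁ - z₂|`, and integrating `exp (± v |z₁ - z₂|)` over
`v ∈ [0, 1]` gives the two bounds.
-/

section SelfConcordant

open Real Set MeasureTheory

theorem integral_exp_mul_unitInterval {c : ℝ} (hc : c ≠ 0) :
    ∫ v in (0:ℝ)..1, exp (c * v) = (exp c - 1) / c := by
  rw [intervalIntegral.integral_comp_mul_left exp hc, integral_exp, mul_zero, exp_zero, mul_one,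
    smul_eq_mul, inv_mul_eq_div]

variable {f f' : ℝ → ℝ}

theorem le_mul_exp_abs_sub_of_abs_deriv_le (hf : ∀ x, HasDerivAt f (f' x) x)
    (hf' : ∀ x, |f' x| ≤ f x) (x y : ℝ) : f y ≤ f x * exp |y - x| := by
  have hmono : Monotone fun t => f t * exp t :=
    monotone_of_hasDerivAt_nonneg (fun t => (hf t).mul (hasDerivAt_exp t)) fun t => by
      have := (abs_le.mp (hf' t)).1
      show (0:ℝ) ≤ f' t * exp t + f t * exp t
      nlinarith [exp_pos t]
  have hanti : Antitone fun t => f t * exp (-t) :=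
    antitone_of_hasDerivAt_nonpos (fun t => (hf t).mul (hasDerivAt_neg t).exp) fun t => by
      have := (abs_le.mp (hf' t)).2
      show f' t * exp (-t) + f t * (exp (-t) * -1) ≤ 0
      nlinarith [exp_pos (-t)]
  rcases le_total x y with hxy | hyx
  · have : f y * exp (-y) ≤ f x * exp (-x) := hanti hxy
    calc f y = f y * exp (-y) * exp y := by rw [mul_assoc, ← exp_add]; simp
      _ ≤ f x * exp (-x) * exp y := by gcongr
      _ = f x * exp |y - x| := by
        rw [abs_of_nonneg (sub_nonneg.mpr hxy), mul_assoc, ← exp_add, neg_add_eq_sub]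
  · have : f y * exp y ≤ f x * exp x := hmono hyx
    calc f y = f y * exp y * exp (-y) := by rw [mul_assoc, ← exp_add]; simp
      _ ≤ f x * exp x * exp (-y) := by gcongr
      _ = f x * exp |y - x| := by
        rw [abs_of_nonpos (sub_nonpos.mpr hyx), mul_assoc, ← exp_add, neg_sub, sub_eq_add_neg]

theorem mul_exp_neg_abs_sub_le_of_abs_deriv_le (hf : ∀ x, HasDerivAt f (f' x) x)
    (hf' : ∀ x, |f' x| ≤ f x) (x y : ℝ) : f x * exp (-|y - x|) ≤ f y := by
  rw [exp_neg, ← div_eq_mul_inv, div_le_iff₀ (exp_pos _), abs_sub_comm]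
  exact le_mul_exp_abs_sub_of_abs_deriv_le hf hf' y x

theorem integral_segment_mem_Icc_of_abs_deriv_le (hf : ∀ x, HasDerivAt f (f' x) x)
    (hf' : ∀ x, |f' x| ≤ f x) {z₁ z₂ : ℝ} (h : z₁ ≠ z₂) :
    (∫ v in (0:ℝ)..1, f (z₁ + v * (z₂ - z₁))) ∈
      Icc (f z₁ * (1 - exp (-|z₁ - z₂|)) / |z₁ - z₂|)
        (f z₁ * (exp |z₁ - z₂| - 1) / |z₁ - z₂|) := by
  set d := |z₁ - z₂|
  have hd : d ≠ 0 := abs_ne_zero.2 (sub_ne_zero.2 h)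
  have hdist : ∀ v ∈ Icc (0:ℝ) 1, |z₁ + v * (z₂ - z₁) - z₁| = d * v := fun v hv => by
    rw [add_sub_cancel_left, abs_mul, abs_of_nonneg hv.1, abs_sub_comm, mul_comm]
  have hcont : Continuous f := continuous_iff_continuousAt.2 fun x => (hf x).continuousAt
  have hint : IntervalIntegrable (fun v => f (z₁ + v * (z₂ - z₁))) volume 0 1 :=
    (hcont.comp (by fun_prop)).intervalIntegrable 0 1
  constructor
  · calc f z₁ * (1 - exp (-d)) / d = ∫ v in (0:ℝ)..1, f z₁ * exp (-d * v) := by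
          rw [intervalIntegral.integral_const_mul, integral_exp_mul_unitInterval (neg_ne_zero.2 hd)]
          field_simp
          ring
      _ ≤ _ := intervalIntegral.integral_mono_on zero_le_one
          ((by fun_prop : Continuous _).intervalIntegrable 0 1) hint fun v hv => by
            rw [neg_mul, ← hdist v hv]
            exact mul_exp_neg_abs_sub_le_of_abs_deriv_le hf hf' z₁ _
  · calc _ ≤ ∫ v in (0:ℝ)..1, f z₁ * exp (d * v) :=
          intervalIntegral.integral_mono_on zero_le_one hint
            ((by fun_prop : Continuous _).intervalIntegrable 0 1) fun v hv => by
            rw [← hdist v hv]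
            exact le_mul_exp_abs_sub_of_abs_deriv_le hf hf' z₁ _
      _ = f z₁ * (exp d - 1) / d := by
          rw [intervalIntegral.integral_const_mul, integral_exp_mul_unitInterval hd, mul_div_assoc]

end SelfConcordant

theorem sigmoid_eq_real_sigmoid : sigmoid = Real.sigmoid := rfl

theorem hasDerivAt_deriv_sigmoid (x : ℝ) :
    HasDerivAt (deriv sigmoid) (deriv sigmoid x * (1 - 2 * sigmoid x)) x := by
  have hσ := Real.hasDerivAt_sigmoid x
  rw [sigmoid_eq_real_sigmoid, Real.deriv_sigmoid]
  exact (hσ.mul (hσ.const_sub 1)).congr_deriv (by ring)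

theorem abs_deriv_deriv_sigmoid_le (x : ℝ) :
    |deriv sigmoid x * (1 - 2 * sigmoid x)| ≤ deriv sigmoid x := by
  have h0 := Real.sigmoid_pos x
  have h1 := Real.sigmoid_lt_one x
  rw [sigmoid_eq_real_sigmoid, Real.deriv_sigmoid, abs_mul, abs_of_pos (by nlinarith)]
  exact mul_le_of_le_one_right (by nlinarith) (abs_le.2 ⟨by linarith, by linarith⟩)

theorem sigmoid_avg_deriv_control (z₁ z₂ : ℝ) (h : z₁ ≠ z₂) :
    deriv sigmoid z₁ * (1 - Real.exp (-|z₁ - z₂|)) / |z₁ - z₂| ≤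
      (∫ v in (0:ℝ)..1, deriv sigmoid (z₁ + v * (z₂ - z₁))) ∧
    (∫ v in (0:ℝ)..1, deriv sigmoid (z₁ + v * (z₂ - z₁))) ≤
      deriv sigmoid z₁ * (Real.exp |z₁ - z₂| - 1) / |z₁ - z₂| :=
  integral_segment_mem_Icc_of_abs_deriv_le hasDerivAt_deriv_sigmoid abs_deriv_deriv_sigmoid_le h
end

section
/- Let {x_s} ⊂ ℝ^d with ‖x_s‖₂ ≤ X, λ > 0, and V_t := Σ_{s=1}^{t-1} x_s x_sᵀ + λ I_d. Then Σ_{t=1}^{T} ‖x_t‖²_{V_t^{-1}} ≤ 2·max(1, X²/λ)·log(det(V_{T+1})/λ^d), where ‖x‖²_M := xᵀ M x. -/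
/-! By the matrix determinant lemma, `det V_{t+1} = det V_t * (1 + u_t)` with
`u_t = x_tᵀ V_t⁻¹ x_t`, so `log (det V_{T+1} / λ^d) = ∑ log (1 + u_t)`. Since `V_t - λ I ⪰ 0`,
`u_t ≤ ‖x_t‖² / λ ≤ X² / λ`, and on `[0, c]` one has `u ≤ 2 max 1 c * log (1 + u)`. -/

open Matrix Finset

namespace Matrix

variable {n : Type*} [Fintype n] [DecidableEq n]

theorem det_add_vecMulVec {α : Type*} [CommRing α] {A : Matrix n n α} (hA : IsUnit A.det)
    (u v : n → α) :
    (A + vecMulVec u v).det = A.det * (1 + v ⬝ᵥ A⁻¹ *ᵥ u) := by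
  rw [vecMulVec_eq Unit, det_add_replicateCol_mul_replicateRow hA, ← replicateRow_vecMul,
    det_unique (1 + _), add_apply, one_apply_eq, replicateRow_mul_replicateCol_apply,
    dotProduct_mulVec]

theorem mul_dotProduct_inv_mulVec_le {A : Matrix n n ℝ} {c : ℝ} (hc : 0 < c)
    (hA : (A - c • 1).PosSemidef) (v : n → ℝ) : c * (v ⬝ᵥ A⁻¹ *ᵥ v) ≤ v ⬝ᵥ v := by
  have hApd : A.PosDef := by
    simpa using PosDef.posSemidef_add hA (PosDef.one.smul hc)
  set y := A⁻¹ *ᵥ v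
  have hAy : A *ᵥ y = v := by
    rw [mulVec_mulVec, mul_nonsing_inv _ ((isUnit_iff_isUnit_det A).mp hApd.isUnit), one_mulVec]
  -- `c (y ⬝ᵥ y) ≤ y ⬝ᵥ v` as `A - c • 1 ≥ 0`; expanding `0 ≤ ‖v - c • y‖²` then gives the claim.
  have hgap := hA.dotProduct_mulVec_nonneg y
  have hsq := dotProduct_star_self_nonneg (v - c • y)
  rw [sub_mulVec, hAy, smul_mulVec, one_mulVec] at hgap
  simp only [dotProduct_sub, sub_dotProduct, dotProduct_smul, smul_dotProduct, smul_eq_mul,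
    star_trivial] at hgap hsq
  rw [dotProduct_comm y v] at hgap hsq
  nlinarith

end Matrix

section RegularizedGram

variable {n : Type*} [DecidableEq n] (v : ℕ → n → ℝ) (lam : ℝ)

-- Truncated subtraction makes `regularizedGram v lam 0 = regularizedGram v lam 1`.
noncomputable def regularizedGram (t : ℕ) : Matrix n n ℝ :=
  ∑ s ∈ Icc 1 (t - 1), vecMulVec (v s) (v s) + lam • 1

@[simp]
theorem regularizedGram_one : regularizedGram v lam 1 = lam • 1 := by
  simp [regularizedGram]

theorem regularizedGram_succ {t : ℕ} (ht : 1 ≤ t) :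
    regularizedGram v lam (t + 1) = regularizedGram v lam t + vecMulVec (v t) (v t) := by
  obtain ⟨k, rfl⟩ := Nat.exists_eq_add_of_le ht
  simp only [regularizedGram, Nat.add_sub_cancel_left, add_tsub_cancel_right]
  rw [add_comm 1 k, sum_Icc_succ_top (by omega)]
  abel

variable [Fintype n]

theorem posSemidef_regularizedGram_sub (t : ℕ) :
    (regularizedGram v lam t - lam • 1).PosSemidef := by
  rw [regularizedGram, add_sub_cancel_right]
  exact posSemidef_sum _ fun s _ => by simpa using posSemidef_vecMulVec_self_star (v s)

variable {lam}

theorem posDef_regularizedGram (hlam : 0 < lam) (t : ℕ) : (regularizedGram v lam t).PosDef := by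
  simpa using PosDef.posSemidef_add (posSemidef_regularizedGram_sub v lam t) (PosDef.one.smul hlam)

theorem det_regularizedGram_succ (hlam : 0 < lam) (T : ℕ) :
    (regularizedGram v lam (T + 1)).det =
      lam ^ Fintype.card n * ∏ t ∈ Icc 1 T, (1 + v t ⬝ᵥ (regularizedGram v lam t)⁻¹ *ᵥ v t) := by
  induction T with
  | zero => simp
  | succ T ih =>
    have hunit := (isUnit_iff_isUnit_det _).mp (posDef_regularizedGram v hlam (T + 1)).isUnit
    rw [regularizedGram_succ v lam (by omega), det_add_vecMulVec hunit, ih,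
      prod_Icc_succ_top (by omega), mul_assoc]

end RegularizedGram

theorem Real.le_two_mul_max_one_mul_log_one_add {u c : ℝ} (hu : 0 ≤ u) (huc : u ≤ c) :
    u ≤ 2 * max 1 c * Real.log (1 + u) := by
  have hlog_nonneg : 0 ≤ Real.log (1 + u) := Real.log_nonneg (by linarith)
  rcases le_or_gt u 1 with hu1 | hu1
  · -- `log (1 + u) ≥ 1 - (1 + u)⁻¹ = u / (1 + u) ≥ u / 2`
    have h := Real.one_sub_inv_le_log_of_pos (x := 1 + u) (by linarith)
    have hinv : 1 - (1 + u)⁻¹ = u / (1 + u) := by field_simp; ring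
    rw [hinv, div_le_iff₀ (by linarith)] at h
    nlinarith [le_max_left 1 c]
  · have hlog_two : 1 / 2 ≤ Real.log (1 + u) :=
      calc (1 / 2 : ℝ) ≤ Real.log 2 := by linarith [Real.log_two_gt_d9]
        _ ≤ Real.log (1 + u) := Real.log_le_log (by norm_num) (by linarith)
    nlinarith [le_max_right 1 c]

theorem elliptical_potential {d : ℕ}
    (x : ℕ → EuclideanSpace ℝ (Fin d)) (X : ℝ) (hx : ∀ s, ‖x s‖ ≤ X)
    (lam : ℝ) (hlam : 0 < lam)
    (V : ℕ → Matrix (Fin d) (Fin d) ℝ)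
    (hV : ∀ t, V t = (∑ s ∈ Finset.Icc 1 (t - 1), Matrix.vecMulVec (x s) (x s))
        + lam • (1 : Matrix (Fin d) (Fin d) ℝ))
    (T : ℕ) :
    ∑ t ∈ Finset.Icc 1 T, (x t) ⬝ᵥ ((V t)⁻¹ *ᵥ (x t)) ≤
      2 * max 1 (X ^ 2 / lam) * Real.log ((V (T + 1)).det / lam ^ d) := by
  have hVgram : V = regularizedGram (fun s => (x s).ofLp) lam := funext hV
  have hpotential_nonneg (t : ℕ) : 0 ≤ x t ⬝ᵥ (V t)⁻¹ *ᵥ x t :=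
    hVgram ▸ (posDef_regularizedGram _ hlam t).inv.posSemidef.dotProduct_mulVec_nonneg _
  have hpotential_le (t : ℕ) : x t ⬝ᵥ (V t)⁻¹ *ᵥ x t ≤ X ^ 2 / lam := by
    rw [le_div_iff₀' hlam]
    calc _ ≤ x t ⬝ᵥ x t :=
          hVgram ▸ mul_dotProduct_inv_mulVec_le hlam (posSemidef_regularizedGram_sub _ lam t) _
      _ = ‖x t‖ ^ 2 := by
        rw [← real_inner_self_eq_norm_sq, EuclideanSpace.inner_eq_star_dotProduct]; rfl
      _ ≤ X ^ 2 := pow_le_pow_left₀ (norm_nonneg _) (hx t) 2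
  rw [hVgram, det_regularizedGram_succ _ hlam, ← hVgram, Fintype.card_fin,
    mul_div_cancel_left₀ _ (by positivity),
    Real.log_prod fun t _ => by linarith [hpotential_nonneg t], mul_sum]
  exact sum_le_sum fun t _ =>
    Real.le_two_mul_max_one_mul_log_one_add (hpotential_nonneg t) (hpotential_le t)
end
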